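/- arXiv:1901.04404 — 2 statements merged into one kernel-verified Lean document; each statement's English description precedes it below -/
import Mathlib

section
/- Let H be a symmetric bilinear form on a real vector space V, β ∈ V with H(β,β)=1, and let a > 0, b ∈ ℝ. Suppose ω₀, B₀ ∈ V satisfy H(ω₀,B₀)=b, H(ω₀,β)=0, H(B₀,β)=0, H(B₀,B₀)=a. Define B_t := (1-t)B₀ + f(t)β and ω_t := (1-t)ω₀ + g(t)β with f(t)=√((2t-t²)a) and g(t)=√((2t-t²)b²/a) for t ∈ [0,1]. Then H(ω_t, B_t) = (1-t)²·b + f(t)·g(t), and if b ≥ 0 this equals b for all t ∈ [0,1]. -/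
theorem constant_cross_helicity_path
    {V : Type*} [AddCommGroup V] [Module ℝ V]
    (H : V →ₗ[ℝ] V →ₗ[ℝ] ℝ) (hsym : ∀ x y, H x y = H y x)
    (a b : ℝ) (ha : 0 < a) (β ω₀ B₀ : V)
    (hβ : H β β = 1) (hcross : H ω₀ B₀ = b) (hω₀β : H ω₀ β = 0)
    (hB₀β : H B₀ β = 0) (hB₀ : H B₀ B₀ = a)
    (f g : ℝ → ℝ)
    (hf : ∀ t, f t = Real.sqrt ((2 * t - t ^ 2) * a))
    (hg : ∀ t, g t = Real.sqrt ((2 * t - t ^ 2) * b ^ 2 / a)) :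
    ∀ t ∈ Set.Icc (0 : ℝ) 1,
      H ((1 - t) • ω₀ + g t • β) ((1 - t) • B₀ + f t • β)
        = (1 - t) ^ 2 * b + f t * g t
      ∧ (0 ≤ b →
          H ((1 - t) • ω₀ + g t • β) ((1 - t) • B₀ + f t • β) = b) := by
  intro t ht
  have hβω₀ : H β ω₀ = 0 := by rw [hsym]; exact hω₀β
  have hmain : H ((1 - t) • ω₀ + g t • β) ((1 - t) • B₀ + f t • β)
      = (1 - t) ^ 2 * b + f t * g t := by
    simp only [map_add, map_smul, LinearMap.add_apply, LinearMap.smul_apply,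
      smul_eq_mul, hcross, hω₀β, hB₀β, hβ]
    have : H β B₀ = 0 := by rw [hsym]; exact hB₀β
    rw [this]; ring
  refine ⟨hmain, fun hb => ?_⟩
  rw [hmain]
  obtain ⟨ht0, ht1⟩ := ht
  have hq : 0 ≤ 2 * t - t ^ 2 := by nlinarith
  have hfg : f t * g t = (2 * t - t ^ 2) * b := by
    rw [hf, hg, ← Real.sqrt_mul (by positivity)]
    have : (2 * t - t ^ 2) * a * ((2 * t - t ^ 2) * b ^ 2 / a) =
        ((2 * t - t ^ 2) * b) ^ 2 := by
      field_simp
    rw [this, Real.sqrt_sq (by positivity)]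
  rw [hfg]; ring
end

section
/- Let V be a real topological vector space and Q : V → ℝ a continuous quadratic form (Q(v)=H(v,v) for a symmetric bilinear form H). Suppose that for every finite-dimensional subspace W ⊆ V there exist u, w ∈ V with H(u,W)=0, H(w,W)=0, Q(u)>0 and Q(w)<0 (i.e., the positive and negative parts of Q are 'infinite-dimensional relative to H-orthogonality'). Then for every a ∈ ℝ and every v₀, v₁ ∈ V with Q(v₀)=Q(v₁)=a, there is a continuous path from v₀ to v₁ inside the level set Q⁻¹(a). -/
/-!
Let `b = H v₀ v₁`. Along the segment `x t = (1 - t) • v₀ + t • v₁` the form takes the value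
`a - 2 t (1 - t) (a - b)`, so it suffices to add a correction `√(t (1 - t)) • z` with `z`
`H`-orthogonal to `v₀, v₁` and `H z z = 2 (a - b)`. Such a `z` is a rescaling of the positive
or the negative vector that the hypothesis provides for `W = span {v₀, v₁}`, according to the
sign of `a - b`.
-/

section

variable {V : Type*} [AddCommGroup V] [Module ℝ V] (H : V →ₗ[ℝ] V →ₗ[ℝ] ℝ)

lemma apply_smul_self_sqrt_div {u : V} (hu : H u u ≠ 0) {c : ℝ} (hc : 0 ≤ c / H u u) :
    H (√(c / H u u) • u) (√(c / H u u) • u) = c := by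
  simp only [map_smul, LinearMap.smul_apply, smul_eq_mul, ← mul_assoc, Real.mul_self_sqrt hc,
    div_mul_cancel₀ c hu]

lemma exists_orthogonal_apply_self_eq
    (hindef : ∀ W : Submodule ℝ V, FiniteDimensional ℝ W →
      ∃ u w : V, (∀ y ∈ W, H u y = 0) ∧ (∀ y ∈ W, H w y = 0) ∧ 0 < H u u ∧ H w w < 0)
    (W : Submodule ℝ V) [FiniteDimensional ℝ W] (c : ℝ) :
    ∃ z : V, (∀ y ∈ W, H z y = 0) ∧ H z z = c := by
  obtain ⟨u, w, hu, hw, hu_pos, hw_neg⟩ := hindef W inferInstance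
  have rescale (v : V) (hv : ∀ y ∈ W, H v y = 0) (hvv : H v v ≠ 0) (hc : 0 ≤ c / H v v) :
      ∃ z : V, (∀ y ∈ W, H z y = 0) ∧ H z z = c :=
    ⟨√(c / H v v) • v, fun y hy => by simp [hv y hy], apply_smul_self_sqrt_div H hvv hc⟩
  rcases le_total 0 c with hc | hc
  · exact rescale u hu hu_pos.ne' (div_nonneg hc hu_pos.le)
  · exact rescale w hw hw_neg.ne (div_nonneg_of_nonpos hc hw_neg.le)

lemma apply_self_segment_add_smul (hsym : ∀ x y, H x y = H y x) {v₀ v₁ z : V}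
    (hz₀ : H z v₀ = 0) (hz₁ : H z v₁ = 0) (t s : ℝ) :
    H ((1 - t) • v₀ + t • v₁ + s • z) ((1 - t) • v₀ + t • v₁ + s • z) =
      (1 - t) ^ 2 * H v₀ v₀ + t ^ 2 * H v₁ v₁ + 2 * t * (1 - t) * H v₀ v₁ + s ^ 2 * H z z := by
  have h₀ : H v₀ z = 0 := (hsym _ _).trans hz₀
  have h₁ : H v₁ z = 0 := (hsym _ _).trans hz₁
  simp only [map_add, map_smul, LinearMap.add_apply, LinearMap.smul_apply, smul_eq_mul,
    hz₀, hz₁, h₀, h₁, hsym v₁ v₀]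
  ring

end

theorem level_sets_path_connected_general
    {V : Type*} [AddCommGroup V] [Module ℝ V] [TopologicalSpace V]
    [IsTopologicalAddGroup V] [ContinuousSMul ℝ V]
    (H : V →ₗ[ℝ] V →ₗ[ℝ] ℝ) (hsym : ∀ x y, H x y = H y x)
    (hindef : ∀ W : Submodule ℝ V, FiniteDimensional ℝ W →
      ∃ u w : V, (∀ y ∈ W, H u y = 0) ∧ (∀ y ∈ W, H w y = 0) ∧
        0 < H u u ∧ H w w < 0)
    (a : ℝ) (v₀ v₁ : V) (h₀ : H v₀ v₀ = a) (h₁ : H v₁ v₁ = a) :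
    JoinedIn {v : V | H v v = a} v₀ v₁ := by
  have : FiniteDimensional ℝ (Submodule.span ℝ {v₀, v₁}) :=
    FiniteDimensional.span_of_finite ℝ (Set.toFinite _)
  obtain ⟨z, hz, hzz⟩ := exists_orthogonal_apply_self_eq H hindef (Submodule.span ℝ {v₀, v₁})
    (2 * (a - H v₀ v₁))
  have hz₀ : H z v₀ = 0 := hz v₀ (Submodule.subset_span (by simp))
  have hz₁ : H z v₁ = 0 := hz v₁ (Submodule.subset_span (by simp))
  refine JoinedIn.ofLine (f := fun t : ℝ => (1 - t) • v₀ + t • v₁ + √(t * (1 - t)) • z)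
    (by fun_prop) (by simp) (by simp) ?_
  rintro _ ⟨t, ⟨ht₀, ht₁⟩, rfl⟩
  rw [Set.mem_ofPred_eq, apply_self_segment_add_smul H hsym hz₀ hz₁,
    Real.sq_sqrt (mul_nonneg ht₀ (sub_nonneg.2 ht₁)), h₀, h₁, hzz]
  ring

theorem level_sets_path_connected
    {V : Type*} [AddCommGroup V] [Module ℝ V] [TopologicalSpace V]
    [IsTopologicalAddGroup V] [ContinuousSMul ℝ V]
    (H : V →ₗ[ℝ] V →ₗ[ℝ] ℝ) (hsym : ∀ x y, H x y = H y x)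
    (hcont : Continuous fun p : V × V => H p.1 p.2)
    (hindef : ∀ W : Submodule ℝ V, FiniteDimensional ℝ W →
      ∃ u w : V, (∀ y ∈ W, H u y = 0) ∧ (∀ y ∈ W, H w y = 0) ∧
        0 < H u u ∧ H w w < 0)
    (a : ℝ) (v₀ v₁ : V) (h₀ : H v₀ v₀ = a) (h₁ : H v₁ v₁ = a) :
    JoinedIn {v : V | H v v = a} v₀ v₁ :=
  level_sets_path_connected_general H hsym hindef a v₀ v₁ h₀ h₁
end
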